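/- arXiv:2001.00375 — 2 statements merged into one kernel-verified Lean document; each statement's English description precedes it below -/
import Mathlib

section
/- Let k be a differential field of characteristic 0 with m commuting derivations, and let B = k{x_1,...,x_n} be the algebra of differential polynomials, i.e. the polynomial algebra k[X^Θ] on the symbols x_i^θ where Θ is the free commutative monoid on the derivation operators δ_1,...,δ_m, with derivations extended by δ_i(x_j^θ) = x_j^{θδ_i}. Then every element f of B not belonging to k is differentially transcendental over k; that is, there is no nonzero differential polynomial g ∈ k{z} in one variable with g(f) = 0. Equivalently, the family of all derivatives f^θ, θ ∈ Θ, is algebraically independent over k. -/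
open MvPolynomial

/-- The free commutative monoid of derivative operators on `m` derivations. -/
abbrev DOp (m : ℕ) := Fin m →₀ ℕ

/-- The differential polynomial algebra `k{x_1,…,x_n}` with `m` commuting derivations:
the polynomial algebra on the variables `x_i^θ`. -/
abbrev DiffPoly (k : Type) [CommRing k] (n m : ℕ) := MvPolynomial (Fin n × DOp m) k

/-- The `i`-th derivation `δ_i` of `k{x_1,…,x_n}`, with `δ_i (x_j^θ) = x_j^{θ δ_i}`. -/
noncomputable def der (k : Type) [CommRing k] (n m : ℕ) (i : Fin m) :
    Derivation k (DiffPoly k n m) (DiffPoly k n m) :=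
  MvPolynomial.mkDerivation k fun p => X (p.1, p.2 + Finsupp.single i 1)

/-- Application of a derivative operator `θ = δ_1^{i_1} ⋯ δ_m^{i_m}`. -/
noncomputable def applyOp {k : Type} [CommRing k] {n m : ℕ} (θ : DOp m)
    (f : DiffPoly k n m) : DiffPoly k n m :=
  Fin.foldr m (fun i g => (⇑(der k n m i))^[θ i] g) f

/-- The differential subalgebra generated by a set: the smallest subalgebra containing it
and closed under all the derivations. -/
noncomputable def diffAdjoin (k : Type) [CommRing k] {n m : ℕ} (S : Set (DiffPoly k n m)) :
    Subalgebra k (DiffPoly k n m) :=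
  sInf {T | S ⊆ T ∧ ∀ i : Fin m, ∀ x ∈ T, der k n m i x ∈ T}

/-- The weight of the variable `x_j^θ`: `1 + |θ|`. -/
def dwt (n m : ℕ) : Fin n × DOp m → ℕ := fun p => 1 + p.2.sum fun _ v => v

/-- The degree of a differential polynomial. -/
noncomputable def ddeg {k : Type} [CommRing k] {n m : ℕ} (f : DiffPoly k n m) : ℕ :=
  weightedTotalDegree (dwt n m) f

/-- The highest homogeneous part of a differential polynomial. -/
noncomputable def dtop {k : Type} [CommRing k] {n m : ℕ} (f : DiffPoly k n m) :
    DiffPoly k n m :=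
  weightedHomogeneousComponent (dwt n m) (ddeg f) f

/-- The variable `x` of `k{x,y}`. -/
noncomputable def xx (k : Type) [CommRing k] (m : ℕ) : DiffPoly k 2 m := X (0, 0)

/-- The variable `y` of `k{x,y}`. -/
noncomputable def yy (k : Type) [CommRing k] (m : ℕ) : DiffPoly k 2 m := X (1, 0)

/-- A differential automorphism: an algebra automorphism commuting with all derivations. -/
def IsDiffAut {k : Type} [CommRing k] {m : ℕ}
    (φ : DiffPoly k 2 m ≃ₐ[k] DiffPoly k 2 m) : Prop :=
  ∀ i x, φ (der k 2 m i x) = der k 2 m i (φ x)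

/-- An elementary automorphism: of the form `(a x + f(y), y)` or `(x, b y + g(x))`. -/
def IsElementary {k : Type} [CommRing k] {m : ℕ}
    (φ : DiffPoly k 2 m ≃ₐ[k] DiffPoly k 2 m) : Prop :=
  IsDiffAut φ ∧
    ((∃ a : k, a ≠ 0 ∧ ∃ f ∈ diffAdjoin k {yy k m},
        φ (xx k m) = C a * xx k m + f ∧ φ (yy k m) = yy k m) ∨
     (∃ b : k, b ≠ 0 ∧ ∃ g ∈ diffAdjoin k {xx k m},
        φ (yy k m) = C b * yy k m + g ∧ φ (xx k m) = xx k m))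

/-- A tame automorphism: a composition of elementary automorphisms. -/
def IsTame {k : Type} [CommRing k] {m : ℕ}
    (φ : DiffPoly k 2 m ≃ₐ[k] DiffPoly k 2 m) : Prop :=
  φ ∈ Subgroup.closure {ψ | IsElementary ψ}

/-- An affine automorphism `(a₁x + b₁y + c₁, a₂x + b₂y + c₂)`. -/
def IsAffine {k : Type} [CommRing k] {m : ℕ}
    (φ : DiffPoly k 2 m ≃ₐ[k] DiffPoly k 2 m) : Prop :=
  IsDiffAut φ ∧ ∃ a₁ b₁ c₁ a₂ b₂ c₂ : k, a₁ * b₂ ≠ a₂ * b₁ ∧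
    φ (xx k m) = C a₁ * xx k m + C b₁ * yy k m + C c₁ ∧
    φ (yy k m) = C a₂ * xx k m + C b₂ * yy k m + C c₂

/-- A triangular automorphism `(a x + f(y), b y + c)`. -/
def IsTriangular {k : Type} [CommRing k] {m : ℕ}
    (φ : DiffPoly k 2 m ≃ₐ[k] DiffPoly k 2 m) : Prop :=
  IsDiffAut φ ∧ ∃ a b c : k, a ≠ 0 ∧ b ≠ 0 ∧ ∃ f ∈ diffAdjoin k {yy k m},
    φ (xx k m) = C a * xx k m + f ∧ φ (yy k m) = C b * yy k m + C c

/-- Membership in `C = Af₂(A) ∩ Tr₂(A)`. -/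
def InC {k : Type} [CommRing k] {m : ℕ}
    (φ : DiffPoly k 2 m ≃ₐ[k] DiffPoly k 2 m) : Prop :=
  IsAffine φ ∧ IsTriangular φ

/-- Membership in the set `A₀ = {id} ∪ {(y, x + a y) : a ∈ k}` of coset representatives. -/
def InA0 {k : Type} [CommRing k] {m : ℕ}
    (φ : DiffPoly k 2 m ≃ₐ[k] DiffPoly k 2 m) : Prop :=
  IsDiffAut φ ∧ (φ = 1 ∨ ∃ a : k,
    φ (xx k m) = yy k m ∧ φ (yy k m) = xx k m + C a * yy k m)

/-- Membership in the set `B₀ = {(x + q(y), y)}`, all homogeneous components of `q` of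
degree at least `2`, of coset representatives. -/
def InB0 {k : Type} [CommRing k] {m : ℕ}
    (φ : DiffPoly k 2 m ≃ₐ[k] DiffPoly k 2 m) : Prop :=
  IsDiffAut φ ∧ ∃ q ∈ diffAdjoin k {yy k m},
    (∀ d : ℕ, d < 2 → weightedHomogeneousComponent (dwt 2 m) d q = 0) ∧
    φ (xx k m) = xx k m + q ∧ φ (yy k m) = yy k m


/-!
Fix a monomial order on `Θ` and a variable `x_j^τ` of `f` with `τ` maximal. Since
`[∂/∂x_j^{τθδ_i}, δ_i] = ∂/∂x_j^{τθ}` and `θ f` only involves variables `x_l^{σρ}` with `x_l^σ`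
a variable of `f` and `ρ ∣ θ`, induction on `θ` gives `∂(θ f)/∂x_j^{τθ} = ∂f/∂x_j^τ`, which is
nonzero in characteristic `0`. So `θ f` involves `x_j^{τθ}`, while no `θ' f` with `θ' < θ`
does. A family of polynomials that is triangular in this sense is algebraically independent:
each member is transcendental over the algebra generated by the earlier ones, because it
involves a variable they do not.
-/

theorem Fin.foldr_iterate_add_single {β : Type*} {M : ℕ} {φ : Fin M → β → β}
    (hφ : ∀ i j, Function.Commute (φ i) (φ j)) (a : Fin M → ℕ) (i : Fin M) (x : β) :
    Fin.foldr M (fun j => (φ j)^[(a + Pi.single i 1 : Fin M → ℕ) j]) x =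
      φ i (Fin.foldr M (fun j => (φ j)^[a j]) x) := by
  induction M with
  | zero => exact i.elim0
  | succ M ih =>
    simp only [Fin.foldr_succ]
    cases i using Fin.cases with
    | zero =>
      simp [Fin.succ_ne_zero, Function.iterate_succ_apply']
    | succ i =>
      have := ih (fun i j => hφ i.succ j.succ) (a ∘ Fin.succ) i
      simp only [Pi.add_apply, Pi.single_apply, Fin.succ_inj, (Fin.succ_ne_zero i).symm, if_false,
        add_zero, Function.comp_apply] at this ⊢
      rw [this]
      exact ((hφ i.succ 0).iterate_right (a 0) _).symm

@[elab_as_elim]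
theorem Finsupp.induction_add_single_one {ι : Type*} {motive : (ι →₀ ℕ) → Prop} (θ : ι →₀ ℕ)
    (zero : motive 0) (add_single : ∀ θ i, motive θ → motive (θ + single i 1)) : motive θ := by
  induction θ using Finsupp.induction₂ with
  | zero => exact zero
  | add_single i b θ _ _ ih =>
    clear * - ih add_single
    induction b with
    | zero => simpa using ih
    | succ b ihb => simpa only [single_add, add_assoc] using add_single _ i ihb

namespace MvPolynomial
variable {σ R : Type*} [CommRing R]

theorem aeval_X_surjective_supported_compl (i : σ) :
    Function.Surjective
      (Polynomial.aeval (R := supported R ({i}ᶜ : Set σ)) (X i : MvPolynomial σ R)) := by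
  intro p
  induction p using MvPolynomial.induction_on with
  | C a => exact ⟨Polynomial.C (algebraMap R _ a), by simp⟩
  | add p q hp hq =>
    obtain ⟨p', rfl⟩ := hp
    obtain ⟨q', rfl⟩ := hq
    exact ⟨p' + q', map_add _ _ _⟩
  | mul_X p j hp =>
    obtain ⟨p', rfl⟩ := hp
    by_cases hj : j = i
    · exact ⟨p' * Polynomial.X, by simp [hj]⟩
    · have hXj : X j ∈ supported R ({i}ᶜ : Set σ) := by
        rw [supported_eq_adjoin_X]
        exact Algebra.subset_adjoin ⟨j, hj, rfl⟩
      exact ⟨p' * Polynomial.C ⟨X j, hXj⟩,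
        by rw [map_mul, Polynomial.aeval_C]; rfl⟩

theorem transcendental_supported_compl_of_mem_vars [IsDomain R] {i : σ} {p : MvPolynomial σ R}
    (hi : i ∈ p.vars) : Transcendental (supported R ({i}ᶜ : Set σ)) p := by
  obtain ⟨q, rfl⟩ := aeval_X_surjective_supported_compl i p
  have hq : q.natDegree ≠ 0 := by
    intro h
    rw [Polynomial.eq_C_of_natDegree_eq_zero h, Polynomial.aeval_C] at hi
    simpa using mem_supported.mp (q.coeff 0).2 hi
  have hlc : q.leadingCoeff ∈ nonZeroDivisors (supported R ({i}ᶜ : Set σ)) :=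
    mem_nonZeroDivisors_of_ne_zero <| Polynomial.leadingCoeff_ne_zero.mpr <|
      Polynomial.ne_zero_of_natDegree_gt (Nat.pos_of_ne_zero hq)
  have hX : Transcendental (supported R ({i}ᶜ : Set σ)) (X i : MvPolynomial σ R) :=
    transcendental_supported_X R (Set.notMem_compl_iff.mpr rfl)
  exact hX.aeval q hq hlc

theorem algebraicIndependent_of_triangular_vars [IsDomain R] {ι : Type*} [LinearOrder ι]
    {g : ι → MvPolynomial σ R} {v : ι → σ} (hv : ∀ i, v i ∈ (g i).vars)
    (hlt : ∀ i j, i < j → v j ∉ (g i).vars) : AlgebraicIndependent R g := by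
  refine algebraicIndependent_of_finite_type fun t ht => ?_
  change AlgebraicIndepOn R g t
  rw [← ht.coe_toFinset]
  induction ht.toFinset using Finset.induction_on_max with
  | empty =>
    rw [Finset.coe_empty]
    exact algebraicIndependent_empty_type_iff.mpr (C_injective σ R)
  | insert a s hs ih =>
    have hle : Algebra.adjoin R (g '' s) ≤ supported R ({v a}ᶜ : Set σ) := by
      rw [Algebra.adjoin_le_iff]
      rintro _ ⟨b, hb, rfl⟩
      exact mem_supported.mpr fun w hw hwa => hlt b a (hs b hb) (hwa ▸ hw)
    rw [Finset.coe_insert]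
    exact ih.insert
      ((transcendental_supported_compl_of_mem_vars (hv a)).of_tower_top_of_subalgebra_le hle)

theorem pderiv_ne_zero_of_mem_vars [NoZeroDivisors R] [CharZero R] {i : σ}
    {p : MvPolynomial σ R} (hi : i ∈ p.vars) : pderiv i p ≠ 0 := by
  obtain ⟨d, hd, hdi⟩ := (mem_vars_iff_mem_support i).mp hi
  have hsplit : d - Finsupp.single i 1 + Finsupp.single i 1 = d :=
    tsub_add_cancel_of_le (Finsupp.single_le_iff.mpr (Nat.one_le_iff_ne_zero.mpr
      (Finsupp.mem_support_iff.mp hdi)))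
  intro h
  have := congrArg (coeff (d - Finsupp.single i 1)) h
  rw [coeff_pderiv, hsplit, coeff_zero] at this
  exact mul_ne_zero (mem_support_iff.mp hd) (Nat.cast_add_one_ne_zero _) (by exact_mod_cast this)

theorem derivation_mem_supported (D : Derivation R (MvPolynomial σ R) (MvPolynomial σ R))
    {s t : Set σ} (hst : s ⊆ t) (hD : ∀ i ∈ s, D (X i) ∈ supported R t) {p : MvPolynomial σ R}
    (hp : p ∈ supported R s) : D p ∈ supported R t := by
  rw [supported_eq_adjoin_X] at hp
  induction hp using Algebra.adjoin_induction with
  | mem x hx =>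
    obtain ⟨i, hi, rfl⟩ := hx
    exact hD i hi
  | algebraMap r => simp
  | add x y _ _ hx hy =>
    rw [map_add]
    exact add_mem hx hy
  | mul x y hx' hy' hx hy =>
    have hsub := supported_mono (R := R) hst
    rw [← supported_eq_adjoin_X] at hx' hy'
    rw [Derivation.leibniz, smul_eq_mul, smul_eq_mul]
    exact add_mem (mul_mem (hsub hx') hy) (mul_mem (hsub hy') hx)

theorem pderiv_mkDerivation_X_comp {e : σ → σ} (he : Function.Injective e) (w : σ)
    (p : MvPolynomial σ R) :
    pderiv (e w) (mkDerivation R (fun u => X (e u)) p) =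
      mkDerivation R (fun u => X (e u)) (pderiv (e w) p) + pderiv w p := by
  classical
  have hlie : ⁅pderiv (e w), mkDerivation R (fun u => X (e u))⁆ = pderiv w :=
    derivation_ext fun u => by
      rw [Derivation.commutator_apply]
      simp only [mkDerivation_X, pderiv_X, Pi.single_apply, he.eq_iff]
      split_ifs <;> simp
  rw [← sub_eq_iff_eq_add', ← Derivation.commutator_apply, hlie]

end MvPolynomial

section DifferentialPolynomial

variable {k : Type} [CommRing k] {n m : ℕ}

theorem der_X (i : Fin m) (w : Fin n × DOp m) :
    der k n m i (X w) = X (w.1, w.2 + Finsupp.single i 1) :=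
  mkDerivation_X _ _ _

theorem der_comm (i j : Fin m) (p : DiffPoly k n m) :
    der k n m i (der k n m j p) = der k n m j (der k n m i p) := by
  have hlie : ⁅der k n m i, der k n m j⁆ = 0 := derivation_ext fun w => by
    rw [Derivation.commutator_apply, der_X, der_X, der_X, der_X, add_right_comm, sub_self,
      Derivation.zero_apply]
  rw [← sub_eq_zero, ← Derivation.commutator_apply, hlie, Derivation.zero_apply]

theorem applyOp_zero (f : DiffPoly k n m) : applyOp 0 f = f := by
  have hid : ∀ M, Fin.foldr M (fun _ g => g) f = f := fun M => by
    induction M with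
    | zero => exact Fin.foldr_zero _ _
    | succ M ih => rw [Fin.foldr_succ]; exact ih
  simpa [applyOp] using hid m

theorem applyOp_add_single (θ : DOp m) (i : Fin m) (f : DiffPoly k n m) :
    applyOp (θ + Finsupp.single i 1) f = der k n m i (applyOp θ f) := by
  rw [applyOp, Finsupp.coe_add, Finsupp.single_eq_pi_single]
  exact Fin.foldr_iterate_add_single (fun i j p => der_comm i j p) θ i f

theorem applyOp_mem_supported [Nontrivial k] (θ : DOp m) (f : DiffPoly k n m) :
    applyOp θ f ∈ supported k {v | ∃ w ∈ f.vars, ∃ σ ≤ θ, v = (w.1, w.2 + σ)} := by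
  induction θ using Finsupp.induction_add_single_one with
  | zero =>
    rw [applyOp_zero]
    exact mem_supported.mpr fun w hw => ⟨w, hw, 0, le_rfl, by simp⟩
  | add_single θ i ih =>
    rw [applyOp_add_single]
    refine derivation_mem_supported _ ?_ ?_ ih
    · rintro _ ⟨w, hw, σ, hσ, rfl⟩
      exact ⟨w, hw, σ, le_add_right hσ, rfl⟩
    · rintro _ ⟨w, hw, σ, hσ, rfl⟩
      rw [der_X]
      exact X_mem_supported.mpr ⟨w, hw, σ + Finsupp.single i 1, add_le_add hσ le_rfl,
        by simp [add_assoc]⟩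

section LeadingVariable

variable [Nontrivial k] (ω : MonomialOrder (Fin m)) {f : DiffPoly k n m} {u : Fin n × DOp m}

theorem notMem_vars_applyOp (hmax : ∀ w ∈ f.vars, ω.toSyn w.2 ≤ ω.toSyn u.2) {θ θ' : DOp m}
    (hθ : ω.toSyn θ < ω.toSyn θ') : (u.1, u.2 + θ') ∉ (applyOp θ f).vars := by
  intro hmem
  obtain ⟨w, hw, σ, hσ, heq⟩ := mem_supported.mp (applyOp_mem_supported θ f) hmem
  have hlt : ω.toSyn (w.2 + σ) < ω.toSyn (u.2 + θ') := by
    rw [map_add, map_add]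
    exact add_lt_add_of_le_of_lt (hmax w hw) ((ω.toSyn_monotone hσ).trans_lt hθ)
  exact hlt.ne (congrArg (fun v => ω.toSyn v.2) heq).symm

theorem pderiv_applyOp (hmax : ∀ w ∈ f.vars, ω.toSyn w.2 ≤ ω.toSyn u.2) (θ : DOp m) :
    pderiv (u.1, u.2 + θ) (applyOp θ f) = pderiv u f := by
  induction θ using Finsupp.induction_add_single_one with
  | zero => rw [add_zero, applyOp_zero]
  | add_single θ i ih =>
    have hshift : Function.Injective fun w : Fin n × DOp m => (w.1, w.2 + Finsupp.single i 1) :=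
      fun a b h => by
        simp only [Prod.mk.injEq, add_left_inj] at h
        exact Prod.ext h.1 h.2
    have hlt : ω.toSyn θ < ω.toSyn (θ + Finsupp.single i 1) :=
      ω.toSyn_strictMono (lt_add_of_pos_right θ
        (pos_iff_ne_zero.mpr (Finsupp.single_ne_zero.mpr one_ne_zero)))
    rw [applyOp_add_single, ← add_assoc]
    calc pderiv (u.1, u.2 + θ + Finsupp.single i 1) (der k n m i (applyOp θ f))
        = der k n m i (pderiv (u.1, u.2 + θ + Finsupp.single i 1) (applyOp θ f)) +
            pderiv (u.1, u.2 + θ) (applyOp θ f) :=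
          pderiv_mkDerivation_X_comp hshift (u.1, u.2 + θ) _
      _ = pderiv u f := by
          rw [add_assoc, pderiv_eq_zero_of_notMem_vars (notMem_vars_applyOp ω hmax hlt),
            map_zero, zero_add, ih]

theorem mem_vars_applyOp [CharZero k] [NoZeroDivisors k] (hu : u ∈ f.vars)
    (hmax : ∀ w ∈ f.vars, ω.toSyn w.2 ≤ ω.toSyn u.2) (θ : DOp m) :
    (u.1, u.2 + θ) ∈ (applyOp θ f).vars := by
  by_contra h
  exact pderiv_ne_zero_of_mem_vars hu
    (pderiv_applyOp ω hmax θ ▸ pderiv_eq_zero_of_notMem_vars h)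

end LeadingVariable

theorem algebraicIndependent_applyOp [IsDomain k] [CharZero k] {f : DiffPoly k n m}
    (hf : ∀ c : k, f ≠ C c) : AlgebraicIndependent k fun θ : DOp m => applyOp θ f := by
  let ω : MonomialOrder (Fin m) := MonomialOrder.degLex
  have hvars : f.vars.Nonempty := by
    rw [Finset.nonempty_iff_ne_empty, Ne, vars_eq_empty_iff_eq_C]
    exact hf _
  obtain ⟨u, hu, hmax⟩ := f.vars.exists_max_image (fun w => ω.toSyn w.2) hvars
  have hind : AlgebraicIndependent k fun s : ω.syn => applyOp (ω.toSyn.symm s) f :=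
    algebraicIndependent_of_triangular_vars (v := fun s => (u.1, u.2 + ω.toSyn.symm s))
      (fun s => mem_vars_applyOp ω hu hmax _)
      (fun s t hst => notMem_vars_applyOp ω hmax (by simpa using hst))
  convert hind.comp ω.toSyn ω.toSyn.injective with θ
  simp

end DifferentialPolynomial

/-- Every element of `k{x_1,…,x_n}` not in `k` is differentially transcendental over `k`:
no nonzero differential polynomial in one variable annihilates it; equivalently the family
of all its derivatives is algebraically independent over `k`. -/
theorem stmt0 {k : Type} [Field k] [CharZero k] {n m : ℕ}
    (f : DiffPoly k n m) (hf : ∀ c : k, f ≠ C c) :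
    (∀ g : DiffPoly k 1 m,
        aeval (fun p : Fin 1 × DOp m => applyOp p.2 f) g = 0 → g = 0) ∧
      AlgebraicIndependent k (fun θ : DOp m => applyOp θ f) := by
  have hind := algebraicIndependent_applyOp hf
  exact ⟨algebraicIndependent_iff.mp
    (hind.comp Prod.snd fun _ _ h => Prod.ext (Subsingleton.elim _ _) h), hind⟩
end

section
/- Let A = k{x,y} be the differential polynomial algebra over a differential field k of characteristic 0 with at least two commuting derivations δ_1, δ_2, and let w = x^{δ_1} − y^{δ_2}. Then the differential endomorphism δ of A determined by δ(x) = x + w^{δ_2} and δ(y) = y + w^{δ_1} is an automorphism of A; its inverse is determined by x ↦ x − v^{δ_2} and y ↦ y − v^{δ_1} where v = x^{δ_1} − y^{δ_2} (one checks δ(x)^{δ_1} − δ(y)^{δ_2} = w). -/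
open MvPolynomial

/-!
Write `φ_s` for the differential endomorphism `x ↦ x + s w^{δ₂}`, `y ↦ y + s w^{δ₁}`. All its
correction terms are derivatives of `w`, and `φ_s` fixes every derivative `w^θ` of `w`: the two
corrections it introduces in `w^θ = x^{θδ₁} - y^{θδ₂}` are both `s w^{θδ₁δ₂}`, because the
derivations commute. Hence `φ_t ∘ φ_s = φ_{s+t}` on the variables, and `φ_1` has inverse `φ_{-1}`.
-/

theorem MvPolynomial.algHom_derivation_comm {R A σ : Type*} [CommRing R] [CommRing A]
    [Algebra R A] (φ : MvPolynomial σ R →ₐ[R] A) (D₁ : Derivation R (MvPolynomial σ R)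
    (MvPolynomial σ R)) (D₂ : Derivation R A A) (h : ∀ i, φ (D₁ (X i)) = D₂ (φ (X i)))
    (f : MvPolynomial σ R) : φ (D₁ f) = D₂ (φ f) := by
  induction f using MvPolynomial.induction_on with
  | C a => simp
  | add p q hp hq => simp only [map_add, hp, hq]
  | mul_X p i hp => simp only [Derivation.leibniz, smul_eq_mul, map_add, map_mul, hp, h]

namespace DiffPoly

variable {k : Type} [CommRing k] {m : ℕ}

theorem der_X (i : Fin m) (p : Fin 2 × DOp m) :
    der k 2 m i (X p) = X (p.1, p.2 + Finsupp.single i 1) :=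
  mkDerivation_X k _ p

variable (i₁ i₂ : Fin m)

/-- The derivative `w^a` of `w = x^{δ₁} - y^{δ₂}`. -/
noncomputable def anickW (a : DOp m) : DiffPoly k 2 m :=
  X (0, a + Finsupp.single i₁ 1) - X (1, a + Finsupp.single i₂ 1)

theorem der_anickW (i : Fin m) (a : DOp m) :
    der k 2 m i (anickW i₁ i₂ a) = anickW i₁ i₂ (a + Finsupp.single i 1) := by
  simp only [anickW, map_sub, der_X, add_right_comm a]

/-- `φ_s`: the variable `x^θ` is sent to `x^θ + s w^{θδ₂}` and `y^θ` to `y^θ + s w^{θδ₁}`. -/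
noncomputable def anickHom (s : k) : DiffPoly k 2 m →ₐ[k] DiffPoly k 2 m :=
  aeval fun p => X p + s • anickW i₁ i₂ (p.2 + Finsupp.single (![i₂, i₁] p.1) 1)

theorem anickHom_X (s : k) (p : Fin 2 × DOp m) :
    anickHom i₁ i₂ s (X p) = X p + s • anickW i₁ i₂ (p.2 + Finsupp.single (![i₂, i₁] p.1) 1) :=
  aeval_X _ p

theorem anickHom_anickW (s : k) (a : DOp m) :
    anickHom i₁ i₂ s (anickW i₁ i₂ a) = anickW i₁ i₂ a := by
  simp only [anickW, map_sub, anickHom_X, Matrix.cons_val_zero, Matrix.cons_val_one,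
    add_right_comm a (Finsupp.single i₂ 1)]
  abel

theorem anickHom_comp (s t : k) :
    (anickHom i₁ i₂ t).comp (anickHom i₁ i₂ s) = anickHom (k := k) i₁ i₂ (s + t) := by
  refine algHom_ext fun p => ?_
  simp only [AlgHom.comp_apply, anickHom_X, map_add, map_smul, anickHom_anickW, add_smul]
  abel

theorem anickHom_zero : anickHom (k := k) i₁ i₂ 0 = AlgHom.id k (DiffPoly k 2 m) :=
  algHom_ext fun p => by simp [anickHom_X]

theorem anickHom_der (s : k) (i : Fin m) (f : DiffPoly k 2 m) :
    anickHom i₁ i₂ s (der k 2 m i f) = der k 2 m i (anickHom i₁ i₂ s f) := by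
  refine algHom_derivation_comm _ _ _ (fun p => ?_) f
  simp only [der_X, anickHom_X, map_add, Derivation.map_smul, der_anickW, add_right_comm p.2]

noncomputable def anickEquiv (s : k) : DiffPoly k 2 m ≃ₐ[k] DiffPoly k 2 m :=
  AlgEquiv.ofAlgHom (anickHom i₁ i₂ s) (anickHom i₁ i₂ (-s))
    (by rw [anickHom_comp, neg_add_cancel, anickHom_zero])
    (by rw [anickHom_comp, add_neg_cancel, anickHom_zero])

theorem isDiffAut_anickEquiv (s : k) : IsDiffAut (anickEquiv i₁ i₂ s) :=
  anickHom_der i₁ i₂ s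

end DiffPoly

/-- The Anick-type endomorphism `x ↦ x + w^{δ₂}`, `y ↦ y + w^{δ₁}` with
`w = x^{δ₁} - y^{δ₂}` is an automorphism of `k{x,y}` (for at least two commuting
derivations), with inverse `x ↦ x - w^{δ₂}`, `y ↦ y - w^{δ₁}`. -/
theorem stmt14 {k : Type} [Field k] {m : ℕ} (hm : 2 ≤ m) :
    let i1 : Fin m := ⟨0, by omega⟩
    let i2 : Fin m := ⟨1, by omega⟩
    let w : DiffPoly k 2 m := der k 2 m i1 (xx k m) - der k 2 m i2 (yy k m)
    ∃ e : DiffPoly k 2 m ≃ₐ[k] DiffPoly k 2 m, IsDiffAut e ∧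
      e (xx k m) = xx k m + der k 2 m i2 w ∧
      e (yy k m) = yy k m + der k 2 m i1 w ∧
      e.symm (xx k m) = xx k m - der k 2 m i2 w ∧
      e.symm (yy k m) = yy k m - der k 2 m i1 w := by
  intro i1 i2 w
  have hw : w = DiffPoly.anickW i1 i2 0 := by
    simp only [w, xx, yy, DiffPoly.der_X, DiffPoly.anickW]
  refine ⟨DiffPoly.anickEquiv i1 i2 1, DiffPoly.isDiffAut_anickEquiv i1 i2 1, ?_⟩
  simp only [hw, DiffPoly.der_anickW, DiffPoly.anickEquiv, AlgEquiv.ofAlgHom_apply,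
    AlgEquiv.ofAlgHom_symm_apply, xx, yy, DiffPoly.anickHom_X, Matrix.cons_val_zero,
    Matrix.cons_val_one, one_smul, neg_smul, ← sub_eq_add_neg, and_self]
end
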